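/- arXiv:2602.09576 — 8 statements merged into one kernel-verified Lean document; each statement's English description precedes it below -/
import Mathlib

section
/- A finite simple graph G admits a full homomorphism to the graph K1 + K2 (the disjoint union of an isolated vertex and an edge) if and only if G contains no induced subgraph isomorphic to K3, to 2K2 (two disjoint edges), or to P4 (the path on four vertices). -/
/-- A full homomorphism between simple graphs: for distinct vertices,
adjacency is preserved and reflected. -/
def FullHom {V W : Type} (G : SimpleGraph V) (H : SimpleGraph W) (f : V → W) : Prop :=
  ∀ u v : V, u ≠ v → (G.Adj u v ↔ H.Adj (f u) (f v))

/-- `G` contains an induced copy of `F`. -/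
def HasInducedCopy {V W : Type} (F : SimpleGraph V) (G : SimpleGraph W) : Prop :=
  ∃ f : V ↪ W, ∀ u v : V, F.Adj u v ↔ G.Adj (f u) (f v)

/-- The disjoint union of an isolated vertex and an edge: K1 + K2. -/
def K1K2 : SimpleGraph (Fin 3) := SimpleGraph.fromRel (fun a b => a = 1 ∧ b = 2)

/-- The triangle K3. -/
def K3graph : SimpleGraph (Fin 3) := ⊤

/-- Two disjoint edges: 2K2. -/
def twoK2 : SimpleGraph (Fin 4) :=
  SimpleGraph.fromRel (fun a b => (a = 0 ∧ b = 1) ∨ (a = 2 ∧ b = 3))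

/-- The path on four vertices: P4. -/
def P4graph : SimpleGraph (Fin 4) :=
  SimpleGraph.fromRel (fun a b => (a = 0 ∧ b = 1) ∨ (a = 1 ∧ b = 2) ∨ (a = 2 ∧ b = 3))

/-!
Full homomorphisms compose with induced embeddings, and none of K3, 2K2, P4 maps fully to
K1 + K2 (a finite check), which gives one direction.

Conversely, fix an edge `ab` of a {K3, 2K2, P4}-free graph and send the neighbours of `b` to
`1`, the remaining neighbours of `a` to `2`, and everything else to `0`. Triangle-freeness makes
both classes independent; a vertex adjacent to neither `a` nor `b` is isolated, since any edge at
it would complete a triangle, a P4 or a 2K2 with `ab`; and a missing edge between the two classes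
would yield an induced P4 through `ab`.
-/

section

variable {V W : Type}

theorem HasInducedCopy.exists_fullHom {U : Type} {F : SimpleGraph V} {G : SimpleGraph W}
    {H : SimpleGraph U} (hFG : HasInducedCopy F G) {f : W → U} (hf : FullHom G H f) :
    ∃ g : V → U, FullHom F H g := by
  obtain ⟨e, he⟩ := hFG
  exact ⟨f ∘ e, fun u v huv => (he u v).trans (hf _ _ (e.injective.ne huv))⟩

/-- Injectivity is automatic when `F` is point-determining (no two vertices share a
neighbourhood). -/
theorem hasInducedCopy_of_adj_iff {F : SimpleGraph V} {G : SimpleGraph W}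
    (hF : ∀ i j, (∀ k, F.Adj i k ↔ F.Adj j k) → i = j) (g : V → W)
    (hg : ∀ i j, F.Adj i j ↔ G.Adj (g i) (g j)) : HasInducedCopy F G :=
  ⟨⟨g, fun i j hij => hF i j fun k => by rw [hg, hg, hij]⟩, hg⟩

theorem k1k2_adj (x y : Fin 3) : K1K2.Adj x y ↔ (x = 1 ∧ y = 2 ∨ x = 2 ∧ y = 1) := by
  simp only [K1K2, SimpleGraph.fromRel_adj]
  decide +revert

theorem not_exists_fullHom_K3graph_K1K2 : ¬ ∃ g : Fin 3 → Fin 3, FullHom K3graph K1K2 g := by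
  simp only [FullHom, K3graph, K1K2, SimpleGraph.fromRel_adj, SimpleGraph.top_adj]
  decide

theorem not_exists_fullHom_twoK2_K1K2 : ¬ ∃ g : Fin 4 → Fin 3, FullHom twoK2 K1K2 g := by
  simp only [FullHom, twoK2, K1K2, SimpleGraph.fromRel_adj]
  decide

theorem not_exists_fullHom_P4graph_K1K2 : ¬ ∃ g : Fin 4 → Fin 3, FullHom P4graph K1K2 g := by
  simp only [FullHom, P4graph, K1K2, SimpleGraph.fromRel_adj]
  decide

namespace SimpleGraph

variable {G : SimpleGraph V} {a b u v x y z w : V}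

theorem hasInducedCopy_K3graph (hxy : G.Adj x y) (hyz : G.Adj y z) (hxz : G.Adj x z) :
    HasInducedCopy K3graph G := by
  refine hasInducedCopy_of_adj_iff (by simp only [K3graph, top_adj]; decide) ![x, y, z] ?_
  intro i j
  fin_cases i <;> fin_cases j <;> simp [K3graph, adj_comm, hxy, hyz, hxz]

theorem hasInducedCopy_twoK2 (hxy : G.Adj x y) (hzw : G.Adj z w) (hxz : ¬ G.Adj x z)
    (hxw : ¬ G.Adj x w) (hyz : ¬ G.Adj y z) (hyw : ¬ G.Adj y w) : HasInducedCopy twoK2 G := by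
  refine hasInducedCopy_of_adj_iff (by simp only [twoK2, fromRel_adj]; decide) ![x, y, z, w] ?_
  intro i j
  fin_cases i <;> fin_cases j <;> simp [twoK2, adj_comm, hxy, hzw, hxz, hxw, hyz, hyw]

theorem hasInducedCopy_P4graph (hxy : G.Adj x y) (hyz : G.Adj y z) (hzw : G.Adj z w)
    (hxz : ¬ G.Adj x z) (hxw : ¬ G.Adj x w) (hyw : ¬ G.Adj y w) : HasInducedCopy P4graph G := by
  refine hasInducedCopy_of_adj_iff (by simp only [P4graph, fromRel_adj]; decide) ![x, y, z, w] ?_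
  intro i j
  fin_cases i <;> fin_cases j <;> simp [P4graph, adj_comm, hxy, hyz, hzw, hxz, hxw, hyw]

theorem not_adj_of_not_adj_of_not_adj (h3 : ¬ HasInducedCopy K3graph G)
    (h2 : ¬ HasInducedCopy twoK2 G) (h4 : ¬ HasInducedCopy P4graph G) (hab : G.Adj a b)
    (hua : ¬ G.Adj u a) (hub : ¬ G.Adj u b) : ¬ G.Adj u v := by
  intro huv
  by_cases hva : G.Adj v a <;> by_cases hvb : G.Adj v b
  · exact h3 (hasInducedCopy_K3graph hva hab hvb)
  · exact h4 (hasInducedCopy_P4graph huv hva hab hua hub hvb)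
  · exact h4 (hasInducedCopy_P4graph huv hvb hab.symm hub hua hva)
  · exact h2 (hasInducedCopy_twoK2 huv hab hua hub hva hvb)

theorem adj_of_adj_of_adj_of_not_adj (h3 : ¬ HasInducedCopy K3graph G)
    (h4 : ¬ HasInducedCopy P4graph G) (hab : G.Adj a b) (hub : G.Adj u b) (hva : G.Adj v a)
    (hvb : ¬ G.Adj v b) : G.Adj u v := by
  by_contra huv
  have hua : ¬ G.Adj u a := fun hua => h3 (hasInducedCopy_K3graph hua hab hub)
  exact h4 (hasInducedCopy_P4graph hva hab hub.symm hvb (huv ∘ Adj.symm) (hua ∘ Adj.symm))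

theorem adj_iff_of_adj (h3 : ¬ HasInducedCopy K3graph G) (h2 : ¬ HasInducedCopy twoK2 G)
    (h4 : ¬ HasInducedCopy P4graph G) (hab : G.Adj a b) :
    G.Adj u v ↔
      G.Adj u b ∧ ¬ G.Adj v b ∧ G.Adj v a ∨ G.Adj v b ∧ ¬ G.Adj u b ∧ G.Adj u a := by
  have adj_a_of_not_adj_b {x y} (hxy : G.Adj x y) (hxb : ¬ G.Adj x b) : G.Adj x a := by
    by_contra hxa
    exact not_adj_of_not_adj_of_not_adj h3 h2 h4 hab hxa hxb hxy
  constructor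
  · intro huv
    by_cases hub : G.Adj u b <;> by_cases hvb : G.Adj v b
    · exact (h3 (hasInducedCopy_K3graph huv hvb hub)).elim
    · exact .inl ⟨hub, hvb, adj_a_of_not_adj_b huv.symm hvb⟩
    · exact .inr ⟨hvb, hub, adj_a_of_not_adj_b huv hub⟩
    · exact (h3 (hasInducedCopy_K3graph huv (adj_a_of_not_adj_b huv.symm hvb)
        (adj_a_of_not_adj_b huv hub))).elim
  · rintro (⟨hub, hvb, hva⟩ | ⟨hvb, hub, hua⟩)
    · exact adj_of_adj_of_adj_of_not_adj h3 h4 hab hub hva hvb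
    · exact (adj_of_adj_of_adj_of_not_adj h3 h4 hab hvb hua hub).symm

def toK1K2 (G : SimpleGraph V) [DecidableRel G.Adj] (a b : V) (v : V) : Fin 3 :=
  if G.Adj v b then 1 else if G.Adj v a then 2 else 0

theorem fullHom_toK1K2 [DecidableRel G.Adj] (h3 : ¬ HasInducedCopy K3graph G)
    (h2 : ¬ HasInducedCopy twoK2 G) (h4 : ¬ HasInducedCopy P4graph G) (hab : G.Adj a b) :
    FullHom G K1K2 (G.toK1K2 a b) := by
  intro u v _
  rw [adj_iff_of_adj h3 h2 h4 hab, k1k2_adj]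
  unfold toK1K2
  split_ifs <;> simp [*]

end SimpleGraph

end

theorem stmt0_general {V : Type} (G : SimpleGraph V) :
    (∃ f : V → Fin 3, FullHom G K1K2 f) ↔
      (¬ HasInducedCopy K3graph G ∧ ¬ HasInducedCopy twoK2 G ∧ ¬ HasInducedCopy P4graph G) := by
  constructor
  · rintro ⟨f, hf⟩
    exact ⟨fun h => not_exists_fullHom_K3graph_K1K2 (h.exists_fullHom hf),
      fun h => not_exists_fullHom_twoK2_K1K2 (h.exists_fullHom hf),
      fun h => not_exists_fullHom_P4graph_K1K2 (h.exists_fullHom hf)⟩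
  · rintro ⟨h3, h2, h4⟩
    classical
    by_cases hE : ∃ a b, G.Adj a b
    · obtain ⟨a, b, hab⟩ := hE
      exact ⟨_, G.fullHom_toK1K2 h3 h2 h4 hab⟩
    · push Not at hE
      exact ⟨fun _ => 0, fun u v _ => by simp [hE u v]⟩

theorem stmt0 {V : Type} [Fintype V] (G : SimpleGraph V) :
    (∃ f : V → Fin 3, FullHom G K1K2 f) ↔
      (¬ HasInducedCopy K3graph G ∧ ¬ HasInducedCopy twoK2 G ∧ ¬ HasInducedCopy P4graph G) :=
  stmt0_general G
end

section
/- Let H be a reflexive complete 2-edge-coloured graph, let A be an alternating component of H (a strongly connected component of the alternating digraph Alt(H)), and let f : A → A be an endomorphism of the substructure induced by A. Then the map g : H → H defined by g(h) = f(h) for h ∈ A and g(h) = h otherwise is an endomorphism of H. -/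
/-- Arc relation of the alternating digraph Alt(H) of a 2-edge-coloured graph (H, R, B). -/
def AltArc {H : Type} (R B : H → H → Prop) (x y : H) : Prop :=
  (B x x ∧ R x y) ∨ (R x x ∧ B x y)

/-- `A` is an alternating component of `(H, R, B)`: a strongly connected
component of the alternating digraph. -/
def IsAltComponent {H : Type} (R B : H → H → Prop) (A : Set H) : Prop :=
  ∃ h : H, A = {u | Relation.ReflTransGen (AltArc R B) h u ∧
    Relation.ReflTransGen (AltArc R B) u h}

theorem stmt5 {H : Type} (R B : H → H → Prop)
    (hRs : Symmetric R) (hBs : Symmetric B)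
    (hrefl : ∀ v, R v v ∨ B v v)
    (hcomp : ∀ u v : H, u ≠ v → R u v ∨ B u v)
    (A : Set H) (hA : IsAltComponent R B A)
    (f : H → H) (hfA : ∀ a ∈ A, f a ∈ A)
    (hfR : ∀ a ∈ A, ∀ b ∈ A, R a b → R (f a) (f b))
    (hfB : ∀ a ∈ A, ∀ b ∈ A, B a b → B (f a) (f b))
    (g : H → H) (hg1 : ∀ h ∈ A, g h = f h) (hg2 : ∀ h, h ∉ A → g h = h) :
    (∀ u v, R u v → R (g u) (g v)) ∧ (∀ u v, B u v → B (g u) (g v)) := by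
  obtain ⟨h0, hA0⟩ := hA
  -- if there is an arc from A into x and from x into A, then x ∈ A
  have inA : ∀ {a x b : H}, a ∈ A → b ∈ A → AltArc R B a x → AltArc R B x b → x ∈ A := by
    intro a x b ha hb hax hxb
    rw [hA0] at ha hb ⊢
    exact ⟨ha.1.tail hax, Relation.ReflTransGen.head hxb hb.2⟩
  -- key: for u ∈ A, v ∉ A, edges from v to f u follow edges from v to u
  have key : ∀ u v, u ∈ A → v ∉ A →
      (R u v → R (f u) v) ∧ (B u v → B (f u) v) := by
    intro u v hu hv
    have hfu : f u ∈ A := hfA u hu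
    have hne : f u ≠ v := fun e => hv (e ▸ hfu)
    constructor
    · intro hR
      by_contra hnR
      have hB : B (f u) v := (hcomp _ _ hne).resolve_left hnR
      -- arc from A to v
      have arc1 : ∃ a ∈ A, AltArc R B a v := by
        rcases hrefl u with hru | hbu
        · exact ⟨f u, hfu, Or.inr ⟨hfR u hu u hu hru, hB⟩⟩
        · exact ⟨u, hu, Or.inl ⟨hbu, hR⟩⟩
      -- arc from v to A
      have arc2 : ∃ b ∈ A, AltArc R B v b := by
        rcases hrefl v with hrv | hbv
        · exact ⟨f u, hfu, Or.inr ⟨hrv, hBs hB⟩⟩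
        · exact ⟨u, hu, Or.inl ⟨hbv, hRs hR⟩⟩
      obtain ⟨a, ha, hav⟩ := arc1
      obtain ⟨b, hb, hvb⟩ := arc2
      exact hv (inA ha hb hav hvb)
    · intro hBuv
      by_contra hnB
      have hRfv : R (f u) v := (hcomp _ _ hne).resolve_right hnB
      have arc1 : ∃ a ∈ A, AltArc R B a v := by
        rcases hrefl u with hru | hbu
        · exact ⟨u, hu, Or.inr ⟨hru, hBuv⟩⟩
        · exact ⟨f u, hfu, Or.inl ⟨hfB u hu u hu hbu, hRfv⟩⟩
      have arc2 : ∃ b ∈ A, AltArc R B v b := by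
        rcases hrefl v with hrv | hbv
        · exact ⟨u, hu, Or.inr ⟨hrv, hBs hBuv⟩⟩
        · exact ⟨f u, hfu, Or.inl ⟨hbv, hRs hRfv⟩⟩
      obtain ⟨a, ha, hav⟩ := arc1
      obtain ⟨b, hb, hvb⟩ := arc2
      exact hv (inA ha hb hav hvb)
  constructor
  · intro u v hR
    by_cases hu : u ∈ A <;> by_cases hv : v ∈ A
    · rw [hg1 u hu, hg1 v hv]; exact hfR u hu v hv hR
    · rw [hg1 u hu, hg2 v hv]; exact (key u v hu hv).1 hR
    · rw [hg2 u hu, hg1 v hv]; exact hRs ((key v u hv hu).1 (hRs hR))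
    · rw [hg2 u hu, hg2 v hv]; exact hR
  · intro u v hB
    by_cases hu : u ∈ A <;> by_cases hv : v ∈ A
    · rw [hg1 u hu, hg1 v hv]; exact hfB u hu v hv hB
    · rw [hg1 u hu, hg2 v hv]; exact (key u v hu hv).2 hB
    · rw [hg2 u hu, hg1 v hv]; exact hBs ((key v u hv hu).2 (hBs hB))
    · rw [hg2 u hu, hg2 v hv]; exact hB
end

section
/- Let H be a reflexive complete 2-edge-coloured graph and let A1 ≤ ⋯ ≤ Ak be a topological ordering of the strongly connected components of the alternating digraph Alt(H). Then for each j, the set Aj is a homogeneous set in the substructure of H induced by A1 ∪ ⋯ ∪ Aj; that is, H decomposes as the iterated homogeneous concatenation A1 ◁h ⋯ ◁h Ak. -/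
theorem stmt6 {H : Type} (R B : H → H → Prop)
    (hRs : Symmetric R) (hBs : Symmetric B)
    (hrefl : ∀ v, R v v ∨ B v v)
    (hcomp : ∀ u v : H, u ≠ v → R u v ∨ B u v)
    (k : ℕ) (A : Fin k → Set H)
    (hcover : ∀ h, ∃ i, h ∈ A i)
    (hdisj : ∀ (h : H) (i j : Fin k), h ∈ A i → h ∈ A j → i = j)
    (hscc : ∀ i, IsAltComponent R B (A i))
    (htop : ∀ (i j : Fin k) (x y : H), x ∈ A i → y ∈ A j → AltArc R B x y → i ≤ j) :
    ∀ (j : Fin k) (h : H), (∃ i, i ≤ j ∧ h ∈ A i) → h ∉ A j →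
      ∀ s ∈ A j, (B h s ↔ B s s) ∧ (R h s ↔ R s s) := by
  rintro j h ⟨i, hij, hhi⟩ hnot s hs
  have hne : h ≠ s := fun e => hnot (e ▸ hs)
  have hnoarc : ¬ AltArc R B s h := by
    intro harc
    have hji : j ≤ i := htop j i s h hs hhi harc
    have : i = j := le_antisymm hij hji
    exact hnot (this ▸ hhi)
  constructor
  · constructor
    · intro hBhs
      by_contra hBss
      rcases hrefl s with hRss | hBss'
      · exact hnoarc (Or.inr ⟨hRss, hBs hBhs⟩)
      · exact hBss hBss'
    · intro hBss
      have hnR : ¬ R h s := fun hR => hnoarc (Or.inl ⟨hBss, hRs hR⟩)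
      rcases hcomp h s hne with hR | hB
      · exact absurd hR hnR
      · exact hB
  · constructor
    · intro hRhs
      by_contra hRss
      rcases hrefl s with hRss' | hBss
      · exact hRss hRss'
      · exact hnoarc (Or.inl ⟨hBss, hRs hRhs⟩)
    · intro hRss
      have hnB : ¬ B h s := fun hB => hnoarc (Or.inr ⟨hRss, hBs hB⟩)
      rcases hcomp h s hne with hR | hB
      · exact hR
      · exact absurd hB hnB
end

section
/- Let H be a reflexive complete 2-edge-coloured graph that admits a decomposition H = A1 ◁h ⋯ ◁h Ak where A1 has at most two elements and each Ai for i ≥ 2 is a single vertex with a loop or a reflexive ∗-edge (two vertices each with a loop, joined by an edge that is both red and blue). Then H has a conservative ternary weak-near-unanimity polymorphism f3 and a conservative 4-ary weak-near-unanimity polymorphism f4 satisfying f3(y,x,x) = f4(y,x,x,x) for all x,y ∈ H. -/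
namespace Stmt12Aux

variable {H : Type}

/-- number of coordinates of `s` equal to `x` -/
noncomputable def cnt {n : ℕ} (s : Fin n → H) (x : H) : ℕ := {i | s i = x}.ncard

/-- index `i` maximizes the lexicographic key (level, multiplicity) -/
def maxAt {n N : ℕ} (lev : H → Fin N) (s : Fin n → H) (i : Fin n) : Prop :=
  ∀ j, lev (s j) < lev (s i) ∨ (lev (s j) = lev (s i) ∧ cnt s (s j) ≤ cnt s (s i))

lemma exists_maxAt {n N : ℕ} [NeZero n] (lev : H → Fin N) (s : Fin n → H) :
    ∃ i, maxAt lev s i := by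
  classical
  obtain ⟨i1, -, h1⟩ := Finset.exists_max_image Finset.univ (fun i => lev (s i))
    ⟨0, Finset.mem_univ 0⟩
  obtain ⟨i2, hi2, h2⟩ := Finset.exists_max_image
    (Finset.univ.filter fun j => lev (s j) = lev (s i1)) (fun i => cnt s (s i))
    ⟨i1, by simp⟩
  simp only [Finset.mem_filter] at hi2
  refine ⟨i2, fun j => ?_⟩
  rcases lt_or_eq_of_le (le_of_le_of_eq (h1 j (Finset.mem_univ j)) hi2.2.symm) with h | h
  · exact Or.inl h
  · exact Or.inr ⟨h, h2 j (by simp [h, hi2.2])⟩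

open scoped Classical in
/-- the least maximizing index -/
noncomputable def sel {n N : ℕ} [NeZero n] (lev : H → Fin N) (s : Fin n → H) : Fin n :=
  (Finset.univ.filter fun i => maxAt lev s i).min' (by
    obtain ⟨i, hi⟩ := exists_maxAt lev s
    exact ⟨i, by simpa using hi⟩)

/-- the operation: leftmost argument with maximal (level, multiplicity) -/
noncomputable def sw {n N : ℕ} [NeZero n] (lev : H → Fin N) (s : Fin n → H) : H :=
  s (sel lev s)

lemma maxAt_sel {n N : ℕ} [NeZero n] (lev : H → Fin N) (s : Fin n → H) :
    maxAt lev s (sel lev s) := by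
  classical
  have := Finset.min'_mem (Finset.univ.filter fun i => maxAt lev s i) (by
    obtain ⟨i, hi⟩ := exists_maxAt lev s
    exact ⟨i, by simpa using hi⟩)
  · simpa [sel] using (by simpa using this : maxAt lev s _)

lemma sel_le {n N : ℕ} [NeZero n] (lev : H → Fin N) (s : Fin n → H) (i : Fin n)
    (hi : maxAt lev s i) : sel lev s ≤ i := by
  classical
  exact Finset.min'_le _ _ (by simpa using hi)

lemma cnt_le_cnt {n : ℕ} (s t : Fin n → H) (x y : H)
    (h : ∀ i, s i = x → t i = y) : cnt s x ≤ cnt t y :=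
  Set.ncard_le_ncard (fun i hi => h i hi) (Set.toFinite _)

/-- Main polymorphism lemma. -/
lemma poly {n N : ℕ} [NeZero n] (lev : H → Fin (N + 1)) (C : H → H → Prop)
    (hCs : Symmetric C)
    (hcross : ∀ u v : H, lev u < lev v → (C u v ↔ C v v))
    (hpair : ∀ u v : H, u ≠ v → lev u = lev v → 0 < lev u → C u v)
    (htwo : ∀ u v w : H, lev u = lev v → lev u = lev w → u = v ∨ u = w ∨ v = w)
    (s t : Fin n → H) (hst : ∀ i, C (s i) (t i)) :
    C (sw lev s) (sw lev t) := by
  set p := sel lev s with hp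
  set q := sel lev t with hq
  have hmu : maxAt lev s p := maxAt_sel lev s
  have hmv : maxAt lev t q := maxAt_sel lev t
  set u := s p with hu
  set v := t q with hv
  show C u v
  have hus : ∀ i, lev (s i) ≤ lev u := fun i => (hmu i).elim le_of_lt (fun h => le_of_eq h.1)
  have hvt : ∀ i, lev (t i) ≤ lev v := fun i => (hmv i).elim le_of_lt (fun h => le_of_eq h.1)
  rcases lt_trichotomy (lev u) (lev v) with hlt | heq | hgt
  · -- lev u < lev v : derive C v v from coordinate q
    have h1 : lev (s q) < lev v := lt_of_le_of_lt (hus q) hlt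
    have hvv : C v v := (hcross (s q) v h1).mp (hst q)
    exact (hcross u v hlt).mpr hvv
  · -- equal levels
    by_cases huv : u = v
    · -- need C u u
      rw [← huv]
      have hvq : t q = u := (huv.trans hv).symm
      have hvtu : ∀ i, lev (t i) ≤ lev u := by rw [huv]; exact hvt
      by_cases hA : ∃ i, s i = u ∧ t i = u
      · obtain ⟨i, h1, h2⟩ := hA
        have := hst i; rwa [h1, h2] at this
      by_cases hB : ∃ i, s i = u ∧ lev (t i) < lev u
      · obtain ⟨i, h1, h2⟩ := hB
        have := hCs (hst i); rw [h1] at this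
        exact (hcross (t i) u h2).mp this
      by_cases hC : ∃ i, t i = u ∧ lev (s i) < lev u
      · obtain ⟨i, h1, h2⟩ := hC
        have := hst i; rw [h1] at this
        exact (hcross (s i) u h2).mp this
      push_neg at hA hB hC
      -- every coordinate where s is u has t equal to the "partner" w, and vice versa
      set w := t p with hw
      have hwu : w ≠ u := hA p rfl
      have hlw : lev w = lev u := le_antisymm (hvtu p) (hB p rfl)
      have hsw' : ∀ i, s i = u → t i = w := by
        intro i hi
        have h1 : lev (t i) = lev u := le_antisymm (hvtu i) (hB i hi)
        rcases htwo u (t i) w h1.symm hlw.symm with h | h | h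
        · exact absurd h.symm (hA i hi)
        · exact absurd h.symm hwu
        · exact h
      have htw' : ∀ i, t i = u → s i = w := by
        intro i hi
        have hsne : s i ≠ u := by
          intro h
          exact (hA i h) hi
        have h1 : lev (s i) = lev u := le_antisymm (hus i) (hC i hi)
        rcases htwo u (s i) w h1.symm hlw.symm with h | h | h
        · exact absurd h.symm hsne
        · exact absurd h.symm hwu
        · exact h
      -- counting chain
      have c1 : cnt s u ≤ cnt t w := cnt_le_cnt s t u w hsw'
      have c2 : cnt t w ≤ cnt t u := by
        have h := hmv p
        rw [← hw, hvq] at h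
        rcases h with h | h
        · rw [hlw] at h; exact absurd h (lt_irrefl _)
        · exact h.2
      have c3 : cnt t u ≤ cnt s w := cnt_le_cnt t s u w htw'
      have hsq : s q = w := htw' q hvq
      have c4 : cnt s w ≤ cnt s u := by
        have h := hmu q
        rw [hsq, ← hu] at h
        rcases h with h | h
        · rw [hlw] at h; exact absurd h (lt_irrefl _)
        · exact h.2
      have e2 : cnt t w = cnt t u := by omega
      have e4 : cnt s w = cnt s u := by omega
      -- p is a maximizer for t, q is a maximizer for s
      have hltp : lev (t p) = lev u := by rw [← hw]; exact hlw
      have hctp : cnt t (t p) = cnt t u := by rw [← hw]; exact e2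
      have hlsq : lev (s q) = lev u := by rw [hsq]; exact hlw
      have hcsq : cnt s (s q) = cnt s u := by rw [hsq]; exact e4
      have hmaxtp : maxAt lev t p := by
        intro j
        rcases hmv j with h | h
        · rw [hvq] at h; left; rw [hltp]; exact h
        · rw [hvq] at h; right
          exact ⟨by rw [hltp]; exact h.1, by rw [hctp]; exact h.2⟩
      have hmaxsq : maxAt lev s q := by
        intro j
        rcases hmu j with h | h
        · left; rw [hlsq]; exact h
        · right; exact ⟨by rw [hlsq]; exact h.1, by rw [hcsq]; exact h.2⟩
      have h1 : p ≤ q := sel_le lev s q hmaxsq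
      have h2 : q ≤ p := sel_le lev t p hmaxtp
      have hpq : p = q := le_antisymm h1 h2
      exfalso
      apply hwu
      rw [hw, hpq, hvq]
    · -- u ≠ v, equal levels
      rcases Nat.eq_zero_or_pos (lev u).val with hL | hL
      swap
      · exact hpair u v huv heq (by rw [Fin.lt_def]; simpa using hL)
      · -- level zero: everything lives in {u, v}
        have hu0 : lev u = 0 := Fin.ext (by simpa using hL)
        have hmem : ∀ x : H, lev x = 0 → x = u ∨ x = v := by
          intro x hx
          rcases htwo x u v (by rw [hx, hu0]) (by rw [hx, ← heq, hu0]) with h | h | h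
          · exact Or.inl h
          · exact Or.inr h
          · exact absurd h huv
        by_cases hne : ∃ i, s i ≠ t i
        · obtain ⟨i, hi⟩ := hne
          have hsi : s i = u ∨ s i = v :=
            hmem _ (le_antisymm (by rw [← hu0]; exact hus i) (Fin.zero_le _))
          have hti : t i = u ∨ t i = v :=
            hmem _ (le_antisymm (by rw [← hu0, heq]; exact hvt i) (Fin.zero_le _))
          have := hst i
          rcases hsi with h1 | h1 <;> rcases hti with h2 | h2 <;>
            rw [h1, h2] at this hi
          · exact absurd rfl hi
          · exact this
          · exact hCs this
          · exact absurd rfl hi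
        · push_neg at hne
          have : s = t := funext hne
          exfalso; apply huv
          rw [hu, hv, hp, hq, this]
  · -- lev v < lev u
    have h1 : lev (t p) < lev u := lt_of_le_of_lt (hvt p) hgt
    have huu : C u u := (hcross (t p) u h1).mp (hCs (hst p))
    exact hCs ((hcross v u hgt).mpr huu)

lemma sw_const {n N : ℕ} [NeZero n] (lev : H → Fin N) (s : Fin n → H) (x : H)
    (h : ∀ i, s i = x) : sw lev s = x := h _

lemma sw_pair {n N : ℕ} [NeZero n] (lev : H → Fin N) (x y : H) (hxy : x ≠ y)
    (s : Fin n → H) (hs : ∀ i, s i = x ∨ s i = y)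
    (j : Fin n) (hj : ∀ i, s i = y ↔ i = j)
    (i1 i2 : Fin n) (h12 : i1 ≠ i2) (h1 : i1 ≠ j) (h2 : i2 ≠ j) :
    sw lev s = if lev x < lev y then y else x := by
  have hsx : ∀ i, i ≠ j → s i = x := by
    intro i hi
    rcases hs i with h | h
    · exact h
    · exact absurd ((hj i).mp h) hi
  have hsy : s j = y := (hj j).mpr rfl
  have hcy : cnt s y = 1 := by
    have : {i | s i = y} = {j} := by
      ext i; simpa using hj i
    rw [cnt, this, Set.ncard_singleton]
  have hcx : 1 < cnt s x := by
    rw [cnt]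
    rw [Set.one_lt_ncard_iff (Set.toFinite _)]
    exact ⟨i1, i2, hsx i1 h1, hsx i2 h2, h12⟩
  have hmax := maxAt_sel lev s
  rcases hs (sel lev s) with hsel | hsel
  · -- selected x
    rw [sw, hsel]
    rcases lt_or_ge (lev x) (lev y) with hlt | hle
    · -- contradiction: y has strictly bigger level
      exfalso
      rcases hmax j with h | h <;> rw [hsy, hsel] at h
      · exact absurd (h.trans hlt) (lt_irrefl _)
      · rw [h.1] at hlt; exact absurd hlt (lt_irrefl _)
    · rw [if_neg (not_lt.mpr hle)]
  · -- selected y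
    have hsel' : sel lev s = j := (hj _).mp hsel
    rw [sw, hsel]
    rcases lt_or_ge (lev x) (lev y) with hlt | hle
    · rw [if_pos hlt]
    · exfalso
      rcases hmax i1 with h | h <;> rw [hsel, hsx i1 h1] at h
      · exact absurd (lt_of_lt_of_le h hle) (lt_irrefl _)
      · have := h.2
        rw [hcy] at this
        omega

end Stmt12Aux

theorem stmt12 {H : Type} (R B : H → H → Prop)
    (hRs : Symmetric R) (hBs : Symmetric B)
    (hrefl : ∀ v, R v v ∨ B v v)
    (hcomp : ∀ u v : H, u ≠ v → R u v ∨ B u v)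
    (k : ℕ) (A : Fin (k + 1) → Set H)
    -- the sets A 0, …, A k partition H
    (hcover : ∀ h, ∃ i, h ∈ A i)
    (hdisj : ∀ (h : H) (i j : Fin (k + 1)), h ∈ A i → h ∈ A j → i = j)
    -- H is the homogeneous concatenation A 0 ◁h ⋯ ◁h A k
    (hconcat : ∀ i j : Fin (k + 1), i < j → ∀ g ∈ A i, ∀ a ∈ A j,
        (B g a ↔ B a a) ∧ (R g a ↔ R a a))
    -- A 0 has at most two elements
    (hA0 : ∃ a b : H, A 0 ⊆ {a, b})
    -- each A i with i ≥ 1 is a single vertex with a loop or a reflexive ∗-edge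
    (hAi : ∀ i : Fin (k + 1), 0 < i →
        (∃ a, A i = {a} ∧ (R a a ∨ B a a)) ∨
        (∃ a b, a ≠ b ∧ A i = {a, b} ∧ (R a a ∨ B a a) ∧ (R b b ∨ B b b) ∧
          R a b ∧ B a b)) :
    ∃ (f3 : (Fin 3 → H) → H) (f4 : (Fin 4 → H) → H),
      -- f3 and f4 are polymorphisms
      (∀ s t : Fin 3 → H, (∀ i, R (s i) (t i)) → R (f3 s) (f3 t)) ∧
      (∀ s t : Fin 3 → H, (∀ i, B (s i) (t i)) → B (f3 s) (f3 t)) ∧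
      (∀ s t : Fin 4 → H, (∀ i, R (s i) (t i)) → R (f4 s) (f4 t)) ∧
      (∀ s t : Fin 4 → H, (∀ i, B (s i) (t i)) → B (f4 s) (f4 t)) ∧
      -- conservative
      (∀ s : Fin 3 → H, ∃ i, f3 s = s i) ∧
      (∀ s : Fin 4 → H, ∃ i, f4 s = s i) ∧
      -- weak near-unanimity
      (∀ x y : H, f3 ![x, x, y] = f3 ![x, y, x] ∧ f3 ![x, y, x] = f3 ![y, x, x]) ∧
      (∀ x y : H, f4 ![x, x, x, y] = f4 ![x, x, y, x] ∧
        f4 ![x, x, y, x] = f4 ![x, y, x, x] ∧ f4 ![x, y, x, x] = f4 ![y, x, x, x]) ∧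
      -- the compatibility equation f3(y,x,x) = f4(y,x,x,x)
      (∀ x y : H, f3 ![y, x, x] = f4 ![y, x, x, x]) := by
  classical
  choose lev hlev using hcover
  have htwo : ∀ u v w : H, lev u = lev v → lev u = lev w → u = v ∨ u = w ∨ v = w := by
    intro u v w h1 h2
    have hu := hlev u
    have hv := hlev v
    have hw := hlev w
    rw [← h1] at hv
    rw [← h2] at hw
    by_cases h0 : lev u = 0
    · obtain ⟨a, b, hab⟩ := hA0
      rw [h0] at hu hv hw
      have h1 := hab hu
      have h2 := hab hv
      have h3 := hab hw
      simp only [Set.mem_insert_iff, Set.mem_singleton_iff] at h1 h2 h3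
      rcases h1 with h1 | h1 <;> rcases h2 with h2 | h2 <;> rcases h3 with h3 | h3 <;>
        rw [h1, h2, h3] <;> tauto
    · have hpos : 0 < lev u := by
        rw [Fin.lt_def]
        have : (lev u).val ≠ 0 := fun h => h0 (Fin.ext (by simpa using h))
        simpa using Nat.pos_of_ne_zero this
      rcases hAi (lev u) hpos with ⟨a, ha, -⟩ | ⟨a, b, -, ha, -, -, -, -⟩
      · rw [ha] at hu hv
        simp only [Set.mem_singleton_iff] at hu hv
        exact Or.inl (hu.trans hv.symm)
      · rw [ha] at hu hv hw
        simp only [Set.mem_insert_iff, Set.mem_singleton_iff] at hu hv hw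
        rcases hu with h1 | h1 <;> rcases hv with h2 | h2 <;> rcases hw with h3 | h3 <;>
          rw [h1, h2, h3] <;> tauto
  have hpairRB : ∀ u v : H, u ≠ v → lev u = lev v → 0 < lev u → R u v ∧ B u v := by
    intro u v huv h1 h2
    have hu := hlev u
    have hv := hlev v
    rw [← h1] at hv
    rcases hAi (lev u) h2 with ⟨a, ha, -⟩ | ⟨a, b, hab, ha, -, -, hR, hB⟩
    · rw [ha] at hu hv
      simp only [Set.mem_singleton_iff] at hu hv
      exact absurd (hu.trans hv.symm) huv
    · rw [ha] at hu hv
      simp only [Set.mem_insert_iff, Set.mem_singleton_iff] at hu hv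
      rcases hu with h | h <;> rcases hv with h' | h' <;> rw [h, h']
      · rw [h, h'] at huv; exact absurd rfl huv
      · exact ⟨hR, hB⟩
      · exact ⟨hRs hR, hBs hB⟩
      · rw [h, h'] at huv; exact absurd rfl huv
  have hcrossR : ∀ u v : H, lev u < lev v → (R u v ↔ R v v) :=
    fun u v h => (hconcat (lev u) (lev v) h u (hlev u) v (hlev v)).2
  have hcrossB : ∀ u v : H, lev u < lev v → (B u v ↔ B v v) :=
    fun u v h => (hconcat (lev u) (lev v) h u (hlev u) v (hlev v)).1
  have h3 : ∀ (x y : H), x ≠ y → ∀ (s : Fin 3 → H) (j : Fin 3),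
      (∀ i, s i = x ∨ s i = y) → (∀ i, s i = y ↔ i = j) →
      Stmt12Aux.sw lev s = if lev x < lev y then y else x := by
    intro x y hxy s j hs hj
    have hex : ∃ i1 i2 : Fin 3, i1 ≠ i2 ∧ i1 ≠ j ∧ i2 ≠ j := by clear hj; revert j; decide
    obtain ⟨i1, i2, h12, ha, hb⟩ := hex
    exact Stmt12Aux.sw_pair lev x y hxy s hs j hj i1 i2 h12 ha hb
  have h4 : ∀ (x y : H), x ≠ y → ∀ (s : Fin 4 → H) (j : Fin 4),
      (∀ i, s i = x ∨ s i = y) → (∀ i, s i = y ↔ i = j) →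
      Stmt12Aux.sw lev s = if lev x < lev y then y else x := by
    intro x y hxy s j hs hj
    have hex : ∃ i1 i2 : Fin 4, i1 ≠ i2 ∧ i1 ≠ j ∧ i2 ≠ j := by clear hj; revert j; decide
    obtain ⟨i1, i2, h12, ha, hb⟩ := hex
    exact Stmt12Aux.sw_pair lev x y hxy s hs j hj i1 i2 h12 ha hb
  refine ⟨Stmt12Aux.sw lev, Stmt12Aux.sw lev, ?_, ?_, ?_, ?_, ?_, ?_, ?_, ?_, ?_⟩
  · exact fun s t hst => Stmt12Aux.poly lev R hRs hcrossR
      (fun u v a b c => (hpairRB u v a b c).1) htwo s t hst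
  · exact fun s t hst => Stmt12Aux.poly lev B hBs hcrossB
      (fun u v a b c => (hpairRB u v a b c).2) htwo s t hst
  · exact fun s t hst => Stmt12Aux.poly lev R hRs hcrossR
      (fun u v a b c => (hpairRB u v a b c).1) htwo s t hst
  · exact fun s t hst => Stmt12Aux.poly lev B hBs hcrossB
      (fun u v a b c => (hpairRB u v a b c).2) htwo s t hst
  · exact fun s => ⟨Stmt12Aux.sel lev s, rfl⟩
  · exact fun s => ⟨Stmt12Aux.sel lev s, rfl⟩
  · intro x y
    by_cases hxy : x = y
    · subst hxy; exact ⟨rfl, rfl⟩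
    · rw [h3 x y hxy ![x, x, y] 2 (by intro i; fin_cases i <;> simp)
          (by intro i; fin_cases i <;> simp [hxy]),
        h3 x y hxy ![x, y, x] 1 (by intro i; fin_cases i <;> simp)
          (by intro i; fin_cases i <;> simp [hxy]),
        h3 x y hxy ![y, x, x] 0 (by intro i; fin_cases i <;> simp)
          (by intro i; fin_cases i <;> simp [hxy])]
      exact ⟨rfl, rfl⟩
  · intro x y
    by_cases hxy : x = y
    · subst hxy; exact ⟨rfl, rfl, rfl⟩
    · rw [h4 x y hxy ![x, x, x, y] 3 (by intro i; fin_cases i <;> simp)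
          (by intro i; fin_cases i <;> simp [hxy]),
        h4 x y hxy ![x, x, y, x] 2 (by intro i; fin_cases i <;> simp)
          (by intro i; fin_cases i <;> simp [hxy]),
        h4 x y hxy ![x, y, x, x] 1 (by intro i; fin_cases i <;> simp)
          (by intro i; fin_cases i <;> simp [hxy]),
        h4 x y hxy ![y, x, x, x] 0 (by intro i; fin_cases i <;> simp)
          (by intro i; fin_cases i <;> simp [hxy])]
      exact ⟨rfl, rfl, rfl⟩
  · intro x y
    by_cases hxy : x = y
    · subst hxy
      rw [Stmt12Aux.sw_const lev ![x, x, x] x (by intro i; fin_cases i <;> simp),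
        Stmt12Aux.sw_const lev ![x, x, x, x] x (by intro i; fin_cases i <;> simp)]
    · rw [h3 x y hxy ![y, x, x] 0 (by intro i; fin_cases i <;> simp)
          (by intro i; fin_cases i <;> simp [hxy]),
        h4 x y hxy ![y, x, x, x] 0 (by intro i; fin_cases i <;> simp)
          (by intro i; fin_cases i <;> simp [hxy])]
end

section
/- A loopless graph H is a threshold graph (constructible from a single vertex by repeatedly adding an isolated vertex or a dominating vertex) if and only if H contains no induced subgraph isomorphic to 2K2, P4, or C4. -/
/-- The cycle on four vertices: C4. -/
def C4graph : SimpleGraph (Fin 4) :=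
  SimpleGraph.fromRel
    (fun a b => (a = 0 ∧ b = 1) ∨ (a = 1 ∧ b = 2) ∨ (a = 2 ∧ b = 3) ∨ (a = 3 ∧ b = 0))

/-- Add a new isolated vertex to `G`. -/
def addIsolated {V : Type} (G : SimpleGraph V) : SimpleGraph (Option V) where
  Adj a b :=
    match a, b with
    | some x, some y => G.Adj x y
    | _, _ => False
  symm := by
    constructor
    intro a b h
    cases a <;> cases b <;> simp_all <;> exact h.symm
  loopless := by
    constructor
    intro a h
    cases a
    · exact h
    · exact G.loopless.irrefl _ h

/-- Add a new dominating vertex to `G` (adjacent to all existing vertices). -/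
def addDominating {V : Type} (G : SimpleGraph V) : SimpleGraph (Option V) where
  Adj a b :=
    match a, b with
    | some x, some y => G.Adj x y
    | some _, none => True
    | none, some _ => True
    | none, none => False
  symm := by
    constructor
    intro a b h
    cases a <;> cases b <;> simp_all <;> exact h.symm
  loopless := by
    constructor
    intro a h
    cases a
    · exact h
    · exact G.loopless.irrefl _ h

/-- Threshold graphs: constructible from a single vertex by repeatedly adding
an isolated vertex or a dominating vertex. -/
inductive IsThreshold : {V : Type} → SimpleGraph V → Prop
  | base : IsThreshold (⊥ : SimpleGraph (Fin 1))
  | isolated {V : Type} {G : SimpleGraph V} : IsThreshold G → IsThreshold (addIsolated G)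
  | dominating {V : Type} {G : SimpleGraph V} : IsThreshold G → IsThreshold (addDominating G)

/-!
Both sides are equivalent to: every nonempty induced subgraph has an isolated or a dominating
vertex. Threshold graphs have this property by induction on their construction, while `2K2`,
`P4` and `C4` do not. Conversely, in a `{2K2, P4, C4}`-free graph the neighbourhoods of any two
vertices `u`, `v` are nested (`N(u) \ {v} ⊆ N(v)` or the other way round), since witnesses
against both inclusions would span one of the three graphs. Hence a vertex of maximum degree is
either dominating or all its non-neighbours are isolated, and deleting such a vertex lets us
induct on the number of vertices.
-/

open SimpleGraph

theorem hasInducedCopy_iff_isIndContained {V W : Type} {F : SimpleGraph V} {G : SimpleGraph W} :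
    HasInducedCopy F G ↔ F ⊴ G :=
  ⟨fun ⟨f, hf⟩ => ⟨⟨f, (hf _ _).symm⟩⟩, fun ⟨f⟩ => ⟨f.toEmbedding, fun _ _ => f.map_adj_iff.symm⟩⟩

def IsTwoK2P4C4Free {V : Type} (G : SimpleGraph V) : Prop :=
  ¬ twoK2 ⊴ G ∧ ¬ P4graph ⊴ G ∧ ¬ C4graph ⊴ G

def IsIsolatedOrDominating {V : Type} (G : SimpleGraph V) (v : V) : Prop :=
  (∀ w, ¬ G.Adj v w) ∨ ∀ w, w ≠ v → G.Adj v w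

def IsThresholdUpToIso {V : Type} (G : SimpleGraph V) : Prop :=
  ∃ (W : Type) (T : SimpleGraph W), IsThreshold T ∧ Nonempty (G ≃g T)

def deleteVertex {V : Type} (G : SimpleGraph V) (v : V) : SimpleGraph {w // w ≠ v} :=
  G.comap (Function.Embedding.subtype _)

section

variable {A V W : Type} {F : SimpleGraph A} {G : SimpleGraph V} {T : SimpleGraph W}

theorem addIsolated_not_adj_none {b : Option V} : ¬ (addIsolated G).Adj none b := by
  cases b <;> exact id

theorem IsTwoK2P4C4Free.anti (hT : IsTwoK2P4C4Free T) (f : G ↪g T) : IsTwoK2P4C4Free G :=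
  ⟨fun h => hT.1 (h.trans ⟨f⟩), fun h => hT.2.1 (h.trans ⟨f⟩), fun h => hT.2.2 (h.trans ⟨f⟩)⟩

theorem not_isIsolatedOrDominating_twoK2 (a : Fin 4) : ¬ IsIsolatedOrDominating twoK2 a := by
  revert a; simp only [IsIsolatedOrDominating, twoK2, fromRel_adj]; decide

theorem not_isIsolatedOrDominating_P4graph (a : Fin 4) : ¬ IsIsolatedOrDominating P4graph a := by
  revert a; simp only [IsIsolatedOrDominating, P4graph, fromRel_adj]; decide

theorem not_isIsolatedOrDominating_C4graph (a : Fin 4) : ¬ IsIsolatedOrDominating C4graph a := by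
  revert a; simp only [IsIsolatedOrDominating, C4graph, fromRel_adj]; decide

def SimpleGraph.Embedding.restrictSome {G' : SimpleGraph (Option V)}
    (hG' : ∀ x y, G'.Adj (some x) (some y) ↔ G.Adj x y) (f : F ↪g G') (hf : ∀ a, f a ≠ none) :
    F ↪g G where
  toFun a := (f a).get (Option.ne_none_iff_isSome.1 (hf a))
  inj' a b hab := f.injective (by simpa using congrArg some hab)
  map_rel_iff' {a b} := by
    change G.Adj ((f a).get _) ((f b).get _) ↔ _
    rw [← hG', Option.some_get, Option.some_get, f.map_adj_iff]

theorem IsThreshold.exists_isIsolatedOrDominating_of_embedding (hT : IsThreshold T)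
    [Nonempty A] (f : F ↪g T) : ∃ a, IsIsolatedOrDominating F a := by
  induction hT with
  | base =>
    obtain ⟨a⟩ := ‹Nonempty A›
    exact ⟨a, .inl fun w h => (f.map_adj_iff.2 h :)⟩
  | @isolated V G _ ih =>
    by_cases hsome : ∀ a, f a ≠ none
    · exact ih (f.restrictSome (fun _ _ => Iff.rfl) hsome)
    obtain ⟨a, ha⟩ := not_forall_not.1 hsome
    refine ⟨a, .inl fun w h => ?_⟩
    have := f.map_adj_iff.2 h
    rw [ha] at this
    exact addIsolated_not_adj_none this
  | @dominating V G _ ih =>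
    by_cases hsome : ∀ a, f a ≠ none
    · exact ih (f.restrictSome (fun _ _ => Iff.rfl) hsome)
    obtain ⟨a, ha⟩ := not_forall_not.1 hsome
    refine ⟨a, .inr fun w hwa => f.map_adj_iff.1 ?_⟩
    obtain ⟨x, hx⟩ := Option.ne_none_iff_exists'.1 (ha ▸ f.injective.ne hwa)
    rw [ha, hx]
    trivial

theorem IsThreshold.isTwoK2P4C4Free (hT : IsThreshold T) : IsTwoK2P4C4Free T :=
  ⟨fun ⟨f⟩ => (hT.exists_isIsolatedOrDominating_of_embedding f).elim
      not_isIsolatedOrDominating_twoK2,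
    fun ⟨f⟩ => (hT.exists_isIsolatedOrDominating_of_embedding f).elim
      not_isIsolatedOrDominating_P4graph,
    fun ⟨f⟩ => (hT.exists_isIsolatedOrDominating_of_embedding f).elim
      not_isIsolatedOrDominating_C4graph⟩

theorem IsThresholdUpToIso.isTwoK2P4C4Free (hG : IsThresholdUpToIso G) : IsTwoK2P4C4Free G :=
  let ⟨_, _, hT, ⟨e⟩⟩ := hG
  hT.isTwoK2P4C4Free.anti e.toEmbedding

theorem injective_vecCons_four {a b c d : V} (hab : a ≠ b) (hac : a ≠ c) (had : a ≠ d)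
    (hbc : b ≠ c) (hbd : b ≠ d) (hcd : c ≠ d) : Function.Injective ![a, b, c, d] := by
  intro i j
  fin_cases i <;> fin_cases j <;> simp [*, eq_comm]

/-- The vertices `x, u, v, y` induce `2K2`, `P4` or `C4`, according to which of `uv`, `xy` are
edges; the case `xy` without `uv` is the mirror image of `uv` without `xy`. -/
theorem IsTwoK2P4C4Free.not_alternating (hG : IsTwoK2P4C4Free G) {u v x y : V}
    (hux : G.Adj u x) (hvy : G.Adj v y) (hvx : ¬ G.Adj v x) (huy : ¬ G.Adj u y)
    (hxv : x ≠ v) (hyu : y ≠ u) : False := by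
  wlog hsymm : G.Adj x y → G.Adj u v generalizing u v x y
  · exact this hux.symm hvy.symm (fun h => huy h.symm) (fun h => hvx h.symm) hyu.symm hxv.symm
      fun h => ((Classical.not_imp.1 hsymm).2 h).elim
  have hinj : Function.Injective ![x, u, v, y] :=
    injective_vecCons_four hux.ne.symm hxv (fun h => huy (h ▸ hux)) (fun h => hvx (h ▸ hux))
      hyu.symm hvy.ne
  have hxu := G.adj_comm x u
  have hyv := G.adj_comm y v
  have hxv' := G.adj_comm x v
  have hyu' := G.adj_comm y u
  have hvu := G.adj_comm v u
  have hyx := G.adj_comm y x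
  by_cases hxy : G.Adj x y
  · refine hG.2.2 ⟨⟨⟨_, hinj⟩, fun {i j} => ?_⟩⟩
    fin_cases i <;> fin_cases j <;> simp [C4graph, *]
  by_cases huv : G.Adj u v
  · refine hG.2.1 ⟨⟨⟨_, hinj⟩, fun {i j} => ?_⟩⟩
    fin_cases i <;> fin_cases j <;> simp [P4graph, *]
  · refine hG.1 ⟨⟨⟨_, hinj⟩, fun {i j} => ?_⟩⟩
    fin_cases i <;> fin_cases j <;> simp [twoK2, *]

theorem IsTwoK2P4C4Free.neighbor_nested (hG : IsTwoK2P4C4Free G) (u v : V) :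
    (∀ x, G.Adj u x → x ≠ v → G.Adj v x) ∨ (∀ y, G.Adj v y → y ≠ u → G.Adj u y) := by
  by_contra! ⟨⟨x, hux, hxv, hvx⟩, ⟨y, hvy, hyu, huy⟩⟩
  exact hG.not_alternating hux hvy hvx huy hxv hyu

theorem SimpleGraph.degree_lt_degree_of_neighborFinset_ssubset [Fintype V] [DecidableRel G.Adj]
    {v w : V} (h : G.neighborFinset v ⊂ G.neighborFinset w) : G.degree v < G.degree w := by
  simpa only [card_neighborFinset_eq_degree] using Finset.card_lt_card h

theorem SimpleGraph.degree_lt_degree_of_insert_neighborFinset_ssubset [Fintype V]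
    [DecidableRel G.Adj] [DecidableEq V] {v w : V}
    (h : insert v (G.neighborFinset v) ⊂ insert w (G.neighborFinset w)) :
    G.degree v < G.degree w := by
  have := Finset.card_lt_card h
  rwa [Finset.card_insert_of_notMem (by simp), Finset.card_insert_of_notMem (by simp),
    card_neighborFinset_eq_degree, card_neighborFinset_eq_degree, Nat.add_lt_add_iff_right] at this

theorem IsTwoK2P4C4Free.exists_isIsolatedOrDominating [Fintype V] [Nonempty V]
    (hG : IsTwoK2P4C4Free G) : ∃ v, IsIsolatedOrDominating G v := by
  classical
  obtain ⟨v, hv⟩ := Finite.exists_max fun x => G.degree x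
  by_cases hdom : ∀ u, u ≠ v → G.Adj v u
  · exact ⟨v, .inr hdom⟩
  push Not at hdom
  obtain ⟨u, huv, hvu⟩ := hdom
  -- a neighbour `w` of `u` would, by nestedness, have a larger (closed) neighbourhood than `v`
  refine ⟨u, .inl fun w huw => ?_⟩
  by_cases hwv : G.Adj w v
  · rcases hG.neighbor_nested w v with hwv' | hvw
    · exact hvu (hwv' u huw.symm huv)
    refine (hv w).not_gt (degree_lt_degree_of_insert_neighborFinset_ssubset ?_)
    refine (Finset.ssubset_iff_of_subset fun z => ?_).2 ⟨u, by simp [huw.symm], by simp [huv, hvu]⟩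
    simp only [Finset.mem_insert, mem_neighborFinset]
    rintro (rfl | hvz)
    · exact .inr hwv
    · exact (em (z = w)).imp_right (hvw z hvz)
  · rcases hG.neighbor_nested u v with huv' | hvu'
    · exact hwv (huv' w huw fun h => hvu (h ▸ huw).symm).symm
    refine (hv u).not_gt (degree_lt_degree_of_neighborFinset_ssubset ?_)
    refine (Finset.ssubset_iff_of_subset fun z => ?_).2
      ⟨w, by simpa, by simpa [G.adj_comm] using hwv⟩
    simp only [mem_neighborFinset]
    exact fun hvz => hvu' z hvz (fun h => hvu (h ▸ hvz))

theorem IsTwoK2P4C4Free.deleteVertex (hG : IsTwoK2P4C4Free G) (v : V) :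
    IsTwoK2P4C4Free (deleteVertex G v) :=
  hG.anti (Embedding.comap _ G)

def SimpleGraph.Iso.addIsolated (e : G ≃g T) : addIsolated G ≃g addIsolated T where
  toEquiv := e.toEquiv.optionCongr
  map_rel_iff' {a b} := by cases a <;> cases b <;> simp [_root_.addIsolated, e.map_adj_iff]

def SimpleGraph.Iso.addDominating (e : G ≃g T) : addDominating G ≃g addDominating T where
  toEquiv := e.toEquiv.optionCongr
  map_rel_iff' {a b} := by cases a <;> cases b <;> simp [_root_.addDominating, e.map_adj_iff]

def addIsolatedDeleteVertexIso [DecidableEq V] {v : V} (hv : ∀ w, ¬ G.Adj v w) :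
    addIsolated (deleteVertex G v) ≃g G where
  toEquiv := Equiv.optionSubtypeNe v
  map_rel_iff' := by
    rintro (_ | x) (_ | y)
    · simp [addIsolated]
    · simpa [addIsolated] using hv y
    · simpa [addIsolated] using fun h => hv x h.symm
    · simp [addIsolated, deleteVertex]

def addDominatingDeleteVertexIso [DecidableEq V] {v : V} (hv : ∀ w, w ≠ v → G.Adj v w) :
    addDominating (deleteVertex G v) ≃g G where
  toEquiv := Equiv.optionSubtypeNe v
  map_rel_iff' := by
    rintro (_ | x) (_ | y)
    · simp [addDominating]
    · simpa [addDominating] using hv y y.2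
    · simpa [addDominating] using (hv x x.2).symm
    · simp [addDominating, deleteVertex]

theorem IsIsolatedOrDominating.isThresholdUpToIso {v : V} (hv : IsIsolatedOrDominating G v)
    (hG : IsThresholdUpToIso (deleteVertex G v)) : IsThresholdUpToIso G := by
  classical
  obtain ⟨W, T, hT, ⟨e⟩⟩ := hG
  rcases hv with hiso | hdom
  · exact ⟨_, _, hT.isolated, ⟨(addIsolatedDeleteVertexIso hiso).symm.trans e.addIsolated⟩⟩
  · exact ⟨_, _, hT.dominating, ⟨(addDominatingDeleteVertexIso hdom).symm.trans e.addDominating⟩⟩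

theorem isThresholdUpToIso_of_subsingleton [Subsingleton V] [Nonempty V] (G : SimpleGraph V) :
    IsThresholdUpToIso G := by
  have : Unique V := uniqueOfSubsingleton (Classical.arbitrary V)
  refine ⟨_, _, .base, ⟨⟨Equiv.ofUnique V (Fin 1), fun {a b} => ?_⟩⟩⟩
  rw [Subsingleton.elim a b]
  simp

theorem IsTwoK2P4C4Free.isThresholdUpToIso [Fintype V] [Nonempty V] (hG : IsTwoK2P4C4Free G) :
    IsThresholdUpToIso G := by
  classical
  induction h : Fintype.card V generalizing V with
  | zero => exact absurd h Fintype.card_ne_zero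
  | succ n ih =>
    rcases Nat.eq_zero_or_pos n with rfl | hn
    · have := Fintype.card_le_one_iff_subsingleton.1 h.le
      exact isThresholdUpToIso_of_subsingleton G
    obtain ⟨v, hv⟩ := hG.exists_isIsolatedOrDominating
    have hcard : Fintype.card {w // w ≠ v} = n := by
      have := Fintype.card_congr (Equiv.optionSubtypeNe v)
      rw [Fintype.card_option, h] at this
      omega
    have : Nonempty {w // w ≠ v} := Fintype.card_pos_iff.1 (hcard ▸ hn)
    exact hv.isThresholdUpToIso (ih (hG.deleteVertex v) hcard)

end

theorem stmt15 {V : Type} [Fintype V] [Nonempty V] (G : SimpleGraph V) :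
    (∃ (W : Type) (T : SimpleGraph W), IsThreshold T ∧ Nonempty (G ≃g T)) ↔
      (¬ HasInducedCopy twoK2 G ∧ ¬ HasInducedCopy P4graph G ∧ ¬ HasInducedCopy C4graph G) := by
  simp only [hasInducedCopy_iff_isIndContained]
  exact ⟨IsThresholdUpToIso.isTwoK2P4C4Free, IsTwoK2P4C4Free.isThresholdUpToIso⟩
end

section
/- For every graph H (possibly with loops) there exists an induced subgraph H' of H that is point-determining (no two distinct vertices have the same closed/open neighbourhood pattern: for all distinct u,v there is a w with uw an edge and vw not an edge, or vice versa) such that there are full homomorphisms H → H' and H' → H; moreover H' is unique up to isomorphism. -/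
/-- The induced substructure on `s` is point-determining: distinct vertices of `s`
are distinguished by some vertex of `s`. -/
def PointDetOn {V : Type} (E : V → V → Prop) (s : Set V) : Prop :=
  ∀ u v : s, u ≠ v → ∃ w : s,
    (E (u : V) (w : V) ∧ ¬ E (v : V) (w : V)) ∨ (¬ E (u : V) (w : V) ∧ E (v : V) (w : V))

/-- `s` carries a point-determining core of `(V, E)`: the induced substructure on `s`
is point-determining and there are full homomorphisms in both directions. -/
def IsPDCore {V : Type} (E : V → V → Prop) (s : Set V) : Prop :=
  PointDetOn E s ∧
  (∃ f : V → s, ∀ u v : V, E u v ↔ E ((f u : V)) ((f v : V))) ∧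
  (∃ g : s → V, ∀ u v : s, E (u : V) (v : V) ↔ E (g u) (g v))

/-- If there is a full hom `V → t` and `s` is point-determining, its restriction
to `s` is injective. -/
lemma pd_inj {V : Type} {E : V → V → Prop} {s t : Set V}
    (hpd : PointDetOn E s) (f : V → t) (hf : ∀ u v : V, E u v ↔ E ((f u : V)) ((f v : V))) :
    Function.Injective (fun u : s => f (u : V)) := by
  intro u v huv
  by_contra hne
  obtain ⟨w, hw⟩ := hpd u v hne
  have h1 : E (u : V) (w : V) ↔ E (v : V) (w : V) := by
    rw [hf (u : V) (w : V), hf (v : V) (w : V)]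
    simp only at huv
    rw [huv]
  tauto

theorem stmt16 {V : Type} [Fintype V] (E : V → V → Prop) (hsymm : Symmetric E) :
    ∃ s : Set V, IsPDCore E s ∧
      ∀ t : Set V, IsPDCore E t →
        ∃ φ : s ≃ t, ∀ u v : s, E (u : V) (v : V) ↔ E ((φ u : V)) ((φ v : V)) := by
  classical
  have hsym : ∀ a b : V, E a b ↔ E b a := fun a b => ⟨fun h => hsymm h, fun h => hsymm h⟩
  let R : Setoid V := ⟨fun u v => ∀ w, E u w ↔ E v w,
    ⟨fun _ _ => Iff.rfl, fun h w => (h w).symm, fun h1 h2 w => (h1 w).trans (h2 w)⟩⟩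
  let rep : V → V := fun v => (Quotient.mk R v).out
  have hrel : ∀ v, R.r (rep v) v := fun v => Quotient.mk_out v
  have hrep : ∀ v w, E v w ↔ E (rep v) w := fun v w => (hrel v w).symm
  have hrep2 : ∀ u v, E u v ↔ E (rep u) (rep v) := by
    intro u v
    rw [hrep u v, hsym, hrep v (rep u), hsym]
  have hrepfix : ∀ v, rep (rep v) = rep v := by
    intro v
    show ((Quotient.mk R ((Quotient.mk R v).out)).out) = _
    rw [Quotient.out_eq]
  have hrepeq : ∀ u v : V, (∀ w, E u w ↔ E v w) → rep u = rep v := by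
    intro u v h
    show (Quotient.mk R u).out = (Quotient.mk R v).out
    rw [Quotient.sound (a := u) (b := v) h]
  have hc : IsPDCore E (Set.range rep) := by
    set s : Set V := Set.range rep with hs
    have hfixs : ∀ u : s, rep (u : V) = (u : V) := by
      rintro ⟨u, a, rfl⟩
      exact hrepfix a
    have hpd : PointDetOn E s := by
      intro u v hne
      by_contra hno
      push_neg at hno
      have hiff : ∀ w : V, E (u : V) w ↔ E (v : V) w := by
        intro w
        have hmem : rep w ∈ s := ⟨w, rfl⟩
        have := hno ⟨rep w, hmem⟩
        have hu : E (u : V) w ↔ E (u : V) (rep w) := by rw [hsym, hrep, hsym]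
        have hv : E (v : V) w ↔ E (v : V) (rep w) := by rw [hsym, hrep, hsym]
        rw [hu, hv]
        tauto
      have : rep (u : V) = rep (v : V) := hrepeq _ _ hiff
      rw [hfixs u, hfixs v] at this
      exact hne (Subtype.ext this)
    refine ⟨hpd, ⟨fun v => ⟨rep v, v, rfl⟩, fun u v => hrep2 u v⟩,
      ⟨fun u => (u : V), fun _ _ => Iff.rfl⟩⟩
  refine ⟨Set.range rep, hc, ?_⟩
  intro t ht
  set s : Set V := Set.range rep with hs
  obtain ⟨hpds, ⟨fs, hfs⟩, -⟩ := hc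
  obtain ⟨hpdt, ⟨ft, hft⟩, -⟩ := ht
  haveI : Fintype s := Fintype.ofFinite _
  haveI : Fintype t := Fintype.ofFinite _
  have hinj1 : Function.Injective (fun u : s => ft (u : V)) := pd_inj hpds ft hft
  have hinj2 : Function.Injective (fun u : t => fs (u : V)) := pd_inj hpdt fs hfs
  have hcard : Fintype.card s = Fintype.card t :=
    le_antisymm (Fintype.card_le_of_injective _ hinj1) (Fintype.card_le_of_injective _ hinj2)
  have hbij : Function.Bijective (fun u : s => ft (u : V)) :=
    (Fintype.bijective_iff_injective_and_card _).2 ⟨hinj1, hcard⟩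
  exact ⟨Equiv.ofBijective _ hbij, fun u v => hft (u : V) (v : V)⟩
end

section
/- Let H be a reflexive complete 2-edge-coloured graph with decomposition H = A1 ◁h ⋯ ◁h Ak into homogeneous concatenations. Then every endomorphism f of the substructure induced by A1 ∪ ⋯ ∪ A_{k-1} extends to an endomorphism of H by acting as the identity on Ak. Consequently, if H is a core then so is A1 ◁h ⋯ ◁h A_{k-1}. -/
theorem stmt17 {H : Type} (R B : H → H → Prop)
    (hRs : Symmetric R) (hBs : Symmetric B)
    (hrefl : ∀ v, R v v ∨ B v v)
    (hcomp : ∀ u v : H, u ≠ v → R u v ∨ B u v)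
    (k : ℕ) (A : Fin (k + 1) → Set H)
    -- the sets A 0, …, A k partition H
    (hcover : ∀ h, ∃ i, h ∈ A i)
    (hdisj : ∀ (h : H) (i j : Fin (k + 1)), h ∈ A i → h ∈ A j → i = j)
    -- H is the homogeneous concatenation A 0 ◁h ⋯ ◁h A k
    (hconcat : ∀ i j : Fin (k + 1), i < j → ∀ g ∈ A i, ∀ a ∈ A j,
        (B g a ↔ B a a) ∧ (R g a ↔ R a a)) :
    -- U is the union A 0 ∪ ⋯ ∪ A (k-1)
    let U : Set H := {h | ∃ i : Fin (k + 1), i ≠ Fin.last k ∧ h ∈ A i}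
    -- (1) every endomorphism of the substructure induced by U extends to an
    -- endomorphism of H by acting as the identity on A k
    (∀ f g : H → H,
        (∀ h ∈ U, f h ∈ U) →
        (∀ u ∈ U, ∀ v ∈ U, R u v → R (f u) (f v)) →
        (∀ u ∈ U, ∀ v ∈ U, B u v → B (f u) (f v)) →
        (∀ h ∈ U, g h = f h) → (∀ h ∈ A (Fin.last k), g h = h) →
        (∀ u v, R u v → R (g u) (g v)) ∧ (∀ u v, B u v → B (g u) (g v))) ∧
    -- (2) if H is a core (every endomorphism is an automorphism, i.e. bijective)
    -- then the substructure induced by U is a core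
    ((∀ g : H → H, (∀ u v, R u v → R (g u) (g v)) →
        (∀ u v, B u v → B (g u) (g v)) → Function.Bijective g) →
      ∀ f : H → H, (∀ h ∈ U, f h ∈ U) →
        (∀ u ∈ U, ∀ v ∈ U, R u v → R (f u) (f v)) →
        (∀ u ∈ U, ∀ v ∈ U, B u v → B (f u) (f v)) →
        Set.BijOn f U U) := by
  intro U
  classical
  -- every element is in U or in A (last k)
  have hUor : ∀ h : H, h ∈ U ∨ h ∈ A (Fin.last k) := by
    intro h
    obtain ⟨i, hi⟩ := hcover h
    by_cases hil : i = Fin.last k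
    · right; rwa [hil] at hi
    · left; exact ⟨i, hil, hi⟩
  have hUnot : ∀ h : H, h ∈ U → h ∉ A (Fin.last k) := by
    rintro h ⟨i, hil, hi⟩ hl
    exact hil (hdisj h i (Fin.last k) hi hl)
  -- edges between U and A (last k)
  have hedge : ∀ u ∈ U, ∀ v ∈ A (Fin.last k), (B u v ↔ B v v) ∧ (R u v ↔ R v v) := by
    rintro u ⟨i, hil, hi⟩ v hv
    exact hconcat i (Fin.last k) (lt_of_le_of_ne (Fin.le_last i) hil) u hi v hv
  have part1 : ∀ f g : H → H,
      (∀ h ∈ U, f h ∈ U) →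
      (∀ u ∈ U, ∀ v ∈ U, R u v → R (f u) (f v)) →
      (∀ u ∈ U, ∀ v ∈ U, B u v → B (f u) (f v)) →
      (∀ h ∈ U, g h = f h) → (∀ h ∈ A (Fin.last k), g h = h) →
      (∀ u v, R u v → R (g u) (g v)) ∧ (∀ u v, B u v → B (g u) (g v)) := by
    intro f g hfU hfR hfB hgU hgL
    have gen : ∀ S : H → H → Prop, Symmetric S →
        (∀ u ∈ U, ∀ v ∈ A (Fin.last k), S u v ↔ S v v) →
        (∀ u ∈ U, ∀ v ∈ U, S u v → S (f u) (f v)) →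
        ∀ u v, S u v → S (g u) (g v) := by
      intro S hSs hSe hSf u v huv
      rcases hUor u with hu | hu <;> rcases hUor v with hv | hv
      · rw [hgU u hu, hgU v hv]; exact hSf u hu v hv huv
      · rw [hgU u hu, hgL v hv]
        exact (hSe (f u) (hfU u hu) v hv).2 ((hSe u hu v hv).1 huv)
      · rw [hgL u hu, hgU v hv]
        exact hSs ((hSe (f v) (hfU v hv) u hu).2 ((hSe v hv u hu).1 (hSs huv)))
      · rw [hgL u hu, hgL v hv]; exact huv
    exact ⟨gen R hRs (fun u hu v hv => (hedge u hu v hv).2) hfR,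
           gen B hBs (fun u hu v hv => (hedge u hu v hv).1) hfB⟩
  refine ⟨part1, ?_⟩
  intro hcore f hfU hfR hfB
  set g : H → H := fun h => if h ∈ U then f h else h with hg
  have hgU : ∀ h ∈ U, g h = f h := fun h hh => if_pos hh
  have hgL : ∀ h ∈ A (Fin.last k), g h = h := fun h hh => if_neg (fun hU => hUnot h hU hh)
  obtain ⟨hgR, hgB⟩ := part1 f g hfU hfR hfB hgU hgL
  have hbij := hcore g hgR hgB
  refine ⟨hfU, ?_, ?_⟩
  · intro u hu v hv huv
    have : g u = g v := by rw [hgU u hu, hgU v hv, huv]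
    exact hbij.1 this
  · intro y hy
    obtain ⟨x, hx⟩ := hbij.2 y
    have hxU : x ∈ U := by
      rcases hUor x with h | h
      · exact h
      · exfalso
        rw [hgL x h] at hx
        exact hUnot y hy (hx ▸ h)
    exact ⟨x, hxU, by rw [← hgU x hxU, hx]⟩
end

section
/- Let H be a reflexive complete 2-edge-coloured graph, A1 ≤ ⋯ ≤ Ak a topological ordering of its alternating components, and suppose each Ai with i ≥ 2 consists of a single vertex with a loop or of two vertices joined by an ∗-edge, and |A1| ≤ 2. If additionally for some i, Ai and A_{i+1} are both monochromatic components of the same loop colour, then swapping Ai and A_{i+1} yields another valid homogeneous-concatenation decomposition: H = A1 ◁h ⋯ ◁h A_{i+1} ◁h Ai ◁h ⋯ ◁h Ak. -/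
/-- Key lemma: if there is no alternating arc from `v` to `u` and `u ≠ v`,
then the edge `uv` carries exactly the colours of the loop at `v`. -/
theorem altKey {H : Type} {R B : H → H → Prop} (hRs : Symmetric R) (hBs : Symmetric B)
    (hrefl : ∀ v, R v v ∨ B v v) (hcomp : ∀ u v : H, u ≠ v → R u v ∨ B u v)
    (u v : H) (hne : u ≠ v) (hno : ¬ AltArc R B v u) :
    (B u v ↔ B v v) ∧ (R u v ↔ R v v) := by
  simp only [AltArc, not_or, not_and] at hno
  obtain ⟨h1, h2⟩ := hno
  rcases hrefl v with hR | hB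
  · have hBvu : ¬ B v u := h2 hR
    have hRuv : R u v := (hcomp u v hne).resolve_right (fun h => hBvu (hBs h))
    have hBvv : ¬ B v v := fun h => (h1 h) (hRs hRuv)
    exact ⟨⟨fun h => absurd (hBs h) hBvu, fun h => absurd h hBvv⟩,
           ⟨fun _ => hR, fun _ => hRuv⟩⟩
  · have hRvu : ¬ R v u := h1 hB
    have hBuv : B u v := (hcomp u v hne).resolve_left (fun h => hRvu (hRs h))
    have hRvv : ¬ R v v := fun h => (h2 h) (hBs hBuv)
    exact ⟨⟨fun _ => hB, fun _ => hBuv⟩,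
           ⟨fun h => absurd (hRs h) hRvu, fun h => absurd h hRvv⟩⟩

theorem stmt19 {H : Type} (R B : H → H → Prop)
    (hRs : Symmetric R) (hBs : Symmetric B)
    (hrefl : ∀ v, R v v ∨ B v v)
    (hcomp : ∀ u v : H, u ≠ v → R u v ∨ B u v)
    (k : ℕ) (A : Fin k → Set H)
    -- A 0 ≤ ⋯ ≤ A (k-1) is a topological ordering of the alternating components of H
    (hcover : ∀ h, ∃ i, h ∈ A i)
    (hdisj : ∀ (h : H) (i j : Fin k), h ∈ A i → h ∈ A j → i = j)
    (hscc : ∀ i, IsAltComponent R B (A i))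
    (htop : ∀ (i j : Fin k) (x y : H), x ∈ A i → y ∈ A j → AltArc R B x y → i ≤ j)
    -- the first component has at most two elements
    (hA0 : ∀ h0 : 0 < k, ∃ a b : H, A ⟨0, h0⟩ ⊆ {a, b})
    -- each later component is a single vertex with a loop or two vertices joined by an ∗-edge
    (hAi : ∀ i : Fin k, 0 < i.val →
        (∃ a, A i = {a} ∧ (R a a ∨ B a a)) ∨
        (∃ a b, a ≠ b ∧ A i = {a, b} ∧ R a b ∧ B a b))
    (i : ℕ) (hi : i + 1 < k)
    -- A i and A (i+1) are monochromatic components of the same loop colour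
    (hmono :
      (∀ v, v ∈ A ⟨i, Nat.lt_of_succ_lt hi⟩ ∪ A ⟨i + 1, hi⟩ → B v v ∧ ¬ R v v) ∨
      (∀ v, v ∈ A ⟨i, Nat.lt_of_succ_lt hi⟩ ∪ A ⟨i + 1, hi⟩ → R v v ∧ ¬ B v v)) :
    -- swapping A i and A (i+1) yields another homogeneous-concatenation decomposition
    ∀ a b : Fin k, a < b →
      ∀ g ∈ A (Equiv.swap (⟨i, Nat.lt_of_succ_lt hi⟩ : Fin k) ⟨i + 1, hi⟩ a),
        ∀ x ∈ A (Equiv.swap (⟨i, Nat.lt_of_succ_lt hi⟩ : Fin k) ⟨i + 1, hi⟩ b),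
          (B g x ↔ B x x) ∧ (R g x ↔ R x x) := by
  set ii : Fin k := ⟨i, Nat.lt_of_succ_lt hi⟩ with hii
  set jj : Fin k := ⟨i + 1, hi⟩ with hjj
  intro a b hab g hg x hx
  by_cases hcase : a = ii ∧ b = jj
  · -- the swapped pair: g ∈ A jj, x ∈ A ii, use monochromaticity
    obtain ⟨ha, hb⟩ := hcase
    rw [ha, Equiv.swap_apply_left] at hg
    rw [hb, Equiv.swap_apply_right] at hx
    have hne : g ≠ x := by
      intro h; subst h
      have := hdisj g jj ii hg hx
      simp only [hii, hjj, Fin.ext_iff] at this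
      omega
    have hnotarc : ¬ AltArc R B g x := by
      intro harc
      have := htop jj ii g x hg hx harc
      simp only [hii, hjj, Fin.le_def] at this
      omega
    simp only [AltArc, not_or, not_and] at hnotarc
    obtain ⟨h1, h2⟩ := hnotarc
    rcases hmono with hm | hm
    · obtain ⟨hBx, hRx⟩ := hm x (Or.inl hx)
      obtain ⟨hBg, hRg⟩ := hm g (Or.inr hg)
      have hnRgx : ¬ R g x := h1 hBg
      have hBgx : B g x := (hcomp g x hne).resolve_left hnRgx
      exact ⟨⟨fun _ => hBx, fun _ => hBgx⟩,
             ⟨fun h => absurd h hnRgx, fun h => absurd h hRx⟩⟩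
    · obtain ⟨hRx, hBx⟩ := hm x (Or.inl hx)
      obtain ⟨hRg, hBg⟩ := hm g (Or.inr hg)
      have hnBgx : ¬ B g x := h2 hRg
      have hRgx : R g x := (hcomp g x hne).resolve_right hnBgx
      exact ⟨⟨fun h => absurd h hnBgx, fun h => absurd h hBx⟩,
             ⟨fun _ => hRx, fun _ => hRgx⟩⟩
  · -- all other pairs: swap preserves order
    have hlt : Equiv.swap ii jj a < Equiv.swap ii jj b := by
      have habv : a.val < b.val := hab
      rcases eq_or_ne a ii with ha1 | ha1
      · -- a = ii, so b ≠ ii; and b ≠ jj by hcase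
        have hb2 : b ≠ jj := fun h => hcase ⟨ha1, h⟩
        have hb1 : b ≠ ii := by
          intro h; rw [ha1, h] at habv; omega
        rw [ha1, Equiv.swap_apply_left, Equiv.swap_apply_of_ne_of_ne hb1 hb2]
        have : b.val ≠ i + 1 := fun h => hb2 (Fin.ext h)
        have : i < b.val := by rw [ha1] at habv; exact habv
        show (jj : Fin k).val < b.val
        simp only [hjj]; omega
      · rcases eq_or_ne a jj with ha2 | ha2
        · have hb1 : b ≠ ii := by
            intro h
            rw [ha2, h] at habv
            simp only [hii, hjj] at habv; omega
          have hb2 : b ≠ jj := by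
            intro h; rw [ha2, h] at habv; omega
          rw [ha2, Equiv.swap_apply_right, Equiv.swap_apply_of_ne_of_ne hb1 hb2]
          show (ii : Fin k).val < b.val
          have : (i : ℕ) + 1 < b.val := by rw [ha2] at habv; exact habv
          simp only [hii]; omega
        · rw [Equiv.swap_apply_of_ne_of_ne ha1 ha2]
          rcases eq_or_ne b ii with hb1 | hb1
          · rw [hb1, Equiv.swap_apply_left]
            show a.val < (jj : Fin k).val
            rw [hb1] at habv
            simp only [hii, hjj] at habv ⊢; omega
          · rcases eq_or_ne b jj with hb2 | hb2
            · rw [hb2, Equiv.swap_apply_right]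
              show a.val < (ii : Fin k).val
              rw [hb2] at habv
              have hav : a.val ≠ i := fun h => ha1 (Fin.ext h)
              simp only [hii, hjj] at habv ⊢; omega
            · rw [Equiv.swap_apply_of_ne_of_ne hb1 hb2]; exact hab
    have hne : g ≠ x := by
      intro h; subst h
      have := hdisj g _ _ hg hx
      rw [this] at hlt
      exact lt_irrefl _ hlt
    have hnotarc : ¬ AltArc R B x g := by
      intro harc
      have := htop _ _ x g hx hg harc
      exact absurd hlt (not_lt.mpr this)
    exact altKey hRs hBs hrefl hcomp g x hne hnotarc
end
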